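/- Let r = s² be a perfect square with s even, and a(n) = ⌊n/s + s/2⌋. Then for all n ≥ s², S(n) := ∑_{j=0}^{s²-1} a(n-j) = sn - s(s-2)/2, and a(S(n)) = n + 1. -/

import Mathlib

/-!
Write `s = 2t`. Since `t` is an integer, `a n = n / s + t` (Euclidean division). By Hermite's
identity, `s` consecutive integers `m, m - 1, …, m - s + 1` have quotients by `s` summing to
`m - s + 1`. Cutting the window of `s²` consecutive integers ending at `n` into `s` such blocks
and summing an arithmetic progression gives `S n = s * n - t * (s - 2)`, which is `s` times
`n + 1 - t`; hence `a (S n) = n + 1`.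
-/

theorem Int.floor_intCast_div_add_half {K : Type*} [Field K] [LinearOrder K]
    [IsStrictOrderedRing K] [FloorRing K] {s : ℤ} (hs : 0 ≤ s) (he : Even s) (n : ℤ) :
    ⌊(n : K) / s + (s : K) / 2⌋ = n / s + s / 2 := by
  obtain ⟨t, rfl⟩ := he
  have hhalf : ((t + t : ℤ) : K) / 2 = (t : K) := by push_cast; ring
  rw [hhalf, Int.floor_add_intCast, Int.floor_div_cast_of_nonneg hs, Int.floor_intCast]
  omega

theorem Finset.sum_range_mul_eq_sum_sum {M : Type*} [AddCommMonoid M] (f : ℕ → M) (q k : ℕ) :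
    ∑ j ∈ range (q * k), f j = ∑ i ∈ range q, ∑ r ∈ range k, f (i * k + r) := by
  induction q with
  | zero => simp
  | succ q ih => rw [Nat.succ_mul, sum_range_add, ih, sum_range_succ]

theorem Int.sum_range_add_one_sub_ediv {k : ℕ} (hk : 0 < k) (m : ℤ) :
    ∑ r ∈ Finset.range k, (m + 1 - r) / k = ∑ r ∈ Finset.range k, (m - r) / k + 1 := by
  have hshift := Finset.sum_range_succ' (fun r : ℕ => (m + 1 - r) / (k : ℤ)) k
  rw [Finset.sum_range_succ] at hshift
  push_cast at hshift
  simp only [add_sub_add_right_eq_sub, sub_zero] at hshift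
  have hlast : m + 1 - k = m + 1 + (-1) * k := by ring
  rw [hlast, Int.add_mul_ediv_right _ _ (by omega)] at hshift
  linarith

/-- Hermite's identity for integer quotients. -/
theorem Int.sum_range_sub_ediv {k : ℕ} (hk : 0 < k) (m : ℤ) :
    ∑ r ∈ Finset.range k, (m - r) / k = m - k + 1 := by
  refine Int.inductionOn' m (k - 1) ?_ (fun m _ ih => ?_) (fun m _ ih => ?_)
  · rw [Finset.sum_eq_zero fun r hr => Int.ediv_eq_zero_of_lt (by grind) (by omega)]
    ring
  · rw [Int.sum_range_add_one_sub_ediv hk, ih]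
    ring
  · have h := Int.sum_range_add_one_sub_ediv hk (m - 1)
    rw [sub_add_cancel, ih] at h
    linarith

theorem Int.two_mul_sum_range_sq_sub_ediv {k : ℕ} (hk : 0 < k) (n : ℤ) :
    2 * ∑ j ∈ Finset.range (k ^ 2), (n - j) / k = 2 * k * (n - k + 1) - k ^ 2 * (k - 1) := by
  have hblock (i : ℕ) :
      ∑ r ∈ Finset.range k, (n - ((i * k + r : ℕ) : ℤ)) / k = n - i * k - k + 1 := by
    push_cast
    simp_rw [← sub_sub]
    exact Int.sum_range_sub_ediv hk _
  have hgauss : 2 * ∑ i ∈ Finset.range k, (i : ℤ) = k * (k - 1) := by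
    have h := Finset.sum_range_id_mul_two k
    zify [hk] at h
    linarith
  rw [sq, Finset.sum_range_mul_eq_sum_sum, Finset.sum_congr rfl fun i _ => hblock i]
  simp only [Finset.sum_sub_distrib, Finset.sum_add_distrib, Finset.sum_const,
    Finset.card_range, ← Finset.sum_mul, nsmul_eq_mul]
  linear_combination -(k : ℤ) * hgauss

theorem stmt9 (s : ℤ) (hs2 : 2 ≤ s) (heven : Even s)
    (a : ℤ → ℤ)
    (ha : ∀ n : ℤ, a n = ⌊(n : ℝ) / s + (s : ℝ) / 2⌋)
    (S : ℤ → ℤ)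
    (hS : ∀ n : ℤ, S n = ∑ j ∈ Finset.range (s ^ 2).toNat, a (n - j)) :
    ∀ n : ℤ, s ^ 2 ≤ n →
      S n = s * n - s * (s - 2) / 2 ∧ a (S n) = n + 1 := by
  intro n _
  have ha' (m : ℤ) : a m = m / s + s / 2 := by
    rw [ha, Int.floor_intCast_div_add_half (by omega) heven]
  have ht : 2 * (s / 2) = s := Int.two_mul_ediv_two_of_even heven
  set t := s / 2
  lift s to ℕ using (by omega)
  have hsum := Int.two_mul_sum_range_sq_sub_ediv (k := s) (by omega) n
  have hSn : S n = s * n - t * (s - 2) := by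
    refine mul_left_cancel₀ (two_ne_zero (α := ℤ)) ?_
    simp only [hS, ha', Finset.sum_add_distrib, Finset.sum_const, Finset.card_range, nsmul_eq_mul,
      ← Nat.cast_pow, Int.toNat_natCast, mul_add, hsum]
    push_cast
    rw [← ht]
    ring
  have hhalf : (s : ℤ) * (s - 2) / 2 = t * (s - 2) := by
    rw [← ht, mul_assoc, Int.mul_ediv_cancel_left _ two_ne_zero]
  refine ⟨by rw [hSn, hhalf], ?_⟩
  have hquot : (s : ℤ) * n - t * (s - 2) = s * (n - t + 1) := by rw [← ht]; ring
  rw [ha', hSn, hquot, Int.mul_ediv_cancel_left _ (by omega)]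
  ring
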